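/- arXiv:math/9504217 — 2 statements merged into one kernel-verified Lean document; each statement's English description precedes it below -/
import Mathlib

section
/- Define the q-shift operator T_z^{1/2} acting on functions of z by (T_z^{1/2} f)(z) = f(q^{1/2} z), and the divided difference operator τ by (τ f)(z) = [f(q^{1/2} z) - f(q^{-1/2} z)]/(z - z^{-1}). Then the q-exponential E_q(x; a, b) = Σ_{n=0}^∞ [q^{n²/4}/(q;q)_n] (a q^{(1-n)/2} z; q)_n (a q^{(1-n)/2} z^{-1}; q)_n b^n, where x = (z + z^{-1})/2, is an eigenfunction of τ with eigenvalue a b q^{-1/4}: τ E_q(·; a, b) = a b q^{-1/4} E_q(·; a, b). -/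
open Finset Complex Filter

/-- Finite q-Pochhammer symbol `(c;q)_n`. -/
noncomputable def qPoch (c q : ℂ) (n : ℕ) : ℂ :=
  ∏ j ∈ Finset.range n, (1 - c * q ^ j)

/-- The Ismail–Zhang q-exponential `E_q(x;a,b)` viewed as a function of the variable `z`,
with `x = (z + z⁻¹)/2`. -/
noncomputable def Eq' (q : ℝ) (a b z : ℂ) : ℂ :=
  ∑' n : ℕ,
    ((q ^ ((n : ℝ) ^ 2 / 4) : ℝ) : ℂ) / qPoch q q n
      * qPoch (a * ((q ^ ((1 - (n : ℝ)) / 2) : ℝ) : ℂ) * z) q n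
      * qPoch (a * ((q ^ ((1 - (n : ℝ)) / 2) : ℝ) : ℂ) * z⁻¹) q n
      * b ^ n

noncomputable def sC (q : ℝ) (t : ℝ) : ℂ := ((q ^ t : ℝ) : ℂ)

noncomputable def F (q : ℝ) (a b z : ℂ) (n : ℕ) : ℂ :=
  ((q ^ ((n : ℝ) ^ 2 / 4) : ℝ) : ℂ) / qPoch q q n
    * qPoch (a * ((q ^ ((1 - (n : ℝ)) / 2) : ℝ) : ℂ) * z) q n
    * qPoch (a * ((q ^ ((1 - (n : ℝ)) / 2) : ℝ) : ℂ) * z⁻¹) q n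
    * b ^ n

set_option linter.unusedSectionVars false

section basic
variable {q : ℝ} (hq : 0 < q) (hq1 : q < 1)
include hq

lemma sC_add (t u : ℝ) : sC q (t + u) = sC q t * sC q u := by
  simp [sC, Real.rpow_add hq]

lemma sC_ne_zero (t : ℝ) : sC q t ≠ 0 := by
  simp [sC, Complex.ofReal_ne_zero, ne_of_gt (Real.rpow_pos_of_pos hq t)]

lemma sC_natCast (n : ℕ) : sC q (n : ℝ) = (q : ℂ) ^ n := by
  simp [sC, Real.rpow_natCast]

lemma sC_one : sC q (1 : ℝ) = (q : ℂ) := by simp [sC]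

lemma norm_sC (t : ℝ) : ‖sC q t‖ = q ^ t := by
  simp [sC, Complex.norm_real, abs_of_pos (Real.rpow_pos_of_pos hq t)]

omit hq in
lemma qPoch_succ (c q' : ℂ) (n : ℕ) :
    qPoch c q' (n + 1) = qPoch c q' n * (1 - c * q' ^ n) := by
  simp [qPoch, Finset.prod_range_succ]

omit hq in
lemma qPoch_succ' (c q' : ℂ) (n : ℕ) :
    qPoch c q' (n + 1) = (1 - c) * qPoch (c * q') q' n := by
  rw [qPoch, Finset.prod_range_succ']
  simp only [pow_zero, mul_one, pow_succ]
  rw [mul_comm, qPoch]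
  congr 1
  exact Finset.prod_congr rfl fun j _ => by ring_nf

include hq1 in
lemma one_sub_q_pow_ne_zero (n : ℕ) : (1 : ℂ) - (q : ℂ) ^ (n + 1) ≠ 0 := by
  intro h
  have h1 : (q : ℂ) ^ (n+1) = 1 := by linear_combination -h
  have : ‖(q : ℂ) ^ (n+1)‖ = 1 := by rw [h1]; simp
  rw [norm_pow, Complex.norm_real, Real.norm_eq_abs, abs_of_pos hq] at this
  have hlt : q ^ (n+1) < 1 := pow_lt_one₀ hq.le hq1 (Nat.succ_ne_zero n)
  linarith

include hq1 in
lemma qPoch_q_ne_zero (n : ℕ) : qPoch q q n ≠ 0 := by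
  rw [qPoch, Finset.prod_ne_zero_iff]
  intro j _
  have := one_sub_q_pow_ne_zero hq hq1 (q := q) j
  rw [pow_succ'] at this
  exact this

lemma F_succ_eq (a b z : ℂ) (n : ℕ) : F q a b z (n+1)
    = sC q (((n:ℝ)+1)^2/4) / qPoch q q (n+1)
      * qPoch (a * sC q (-(n:ℝ)/2) * z) q (n+1)
      * qPoch (a * sC q (-(n:ℝ)/2) * z⁻¹) q (n+1) * b^(n+1) := by
  have e1 : (1 - ((n+1:ℕ):ℝ))/2 = -(n:ℝ)/2 := by push_cast; ring
  have e2 : (((n+1:ℕ):ℝ))^2/4 = ((n:ℝ)+1)^2/4 := by push_cast; ring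
  show sC q ((((n+1:ℕ)):ℝ)^2/4) / qPoch q q (n+1)
      * qPoch (a * sC q ((1 - ((n+1:ℕ):ℝ))/2) * z) q (n+1)
      * qPoch (a * sC q ((1 - ((n+1:ℕ):ℝ))/2) * z⁻¹) q (n+1) * b^(n+1) = _
  rw [e1, e2]

lemma F_eq (a b z : ℂ) (n : ℕ) : F q a b z n
    = sC q ((n:ℝ)^2/4) / qPoch q q n
      * qPoch (a * sC q ((1-(n:ℝ))/2) * z) q n
      * qPoch (a * sC q ((1-(n:ℝ))/2) * z⁻¹) q n * b^n := rfl

include hq1 in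
lemma F_succ_plus (a b z : ℂ) (hz : z ≠ 0) (n : ℕ) :
    F q a b (sC q ((1:ℝ)/2) * z) (n + 1)
      = b * (1 - a * sC q (((n:ℝ)+1)/2) * z)
          * (sC q ((2*(n:ℝ)+1)/4) - a * sC q (-(1:ℝ)/4) * z⁻¹)
          / (1 - (q:ℂ) ^ (n+1)) * F q a b z n := by
  rw [F_succ_eq hq, F_eq hq]
  have hp1 : a * sC q (-(n:ℝ)/2) * (sC q ((1:ℝ)/2) * z) = a * sC q ((1-(n:ℝ))/2) * z := by
    rw [show (1-(n:ℝ))/2 = -(n:ℝ)/2 + (1:ℝ)/2 by ring, sC_add hq]; ring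
  have hp2 : a * sC q (-(n:ℝ)/2) * (sC q ((1:ℝ)/2) * z)⁻¹
      = a * sC q (-((n:ℝ)+1)/2) * z⁻¹ := by
    rw [mul_inv, show -(n:ℝ)/2 = -((n:ℝ)+1)/2 + (1:ℝ)/2 by ring, sC_add hq]
    field_simp [sC_ne_zero hq]
  rw [hp1, hp2, qPoch_succ (a * sC q ((1-(n:ℝ))/2) * z),
    qPoch_succ' (a * sC q (-((n:ℝ)+1)/2) * z⁻¹), qPoch_succ (q:ℂ) (q:ℂ) n]
  have hp1' : a * sC q ((1-(n:ℝ))/2) * z * (q:ℂ)^n = a * sC q (((n:ℝ)+1)/2) * z := by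
    rw [← sC_natCast hq, show ((n:ℝ)+1)/2 = (1-(n:ℝ))/2 + (n:ℝ) by ring, sC_add hq]; ring
  have hp2' : a * sC q (-((n:ℝ)+1)/2) * z⁻¹ * (q:ℂ) = a * sC q ((1-(n:ℝ))/2) * z⁻¹ := by
    nth_rewrite 1 [← sC_one hq]
    rw [show (1-(n:ℝ))/2 = -((n:ℝ)+1)/2 + 1 by ring, sC_add hq]; ring
  rw [hp1', hp2']
  have hc : sC q (((n:ℝ)+1)^2/4) = sC q ((2*(n:ℝ)+1)/4) * sC q ((n:ℝ)^2/4) := by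
    rw [← sC_add hq]; congr 1; ring
  have hcomb : sC q ((2*(n:ℝ)+1)/4) - a * sC q (-(1:ℝ)/4) * z⁻¹
      = sC q ((2*(n:ℝ)+1)/4) * (1 - a * sC q (-((n:ℝ)+1)/2) * z⁻¹) := by
    rw [mul_sub, mul_one]
    congr 1
    rw [show (-(1:ℝ)/4) = (2*(n:ℝ)+1)/4 + (-((n:ℝ)+1)/2) by ring, sC_add hq]; ring
  rw [hc, hcomb]
  have h1 := qPoch_q_ne_zero hq hq1 n
  have h2 := one_sub_q_pow_ne_zero hq hq1 (q:=q) n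
  have h2' : (1:ℂ) - (q:ℂ) * (q:ℂ)^n ≠ 0 := by
    intro h; apply h2; rw [pow_succ]; linear_combination h
  field_simp [hz, h1, h2, h2']
  ring

include hq1 in
lemma F_succ_minus (a b z : ℂ) (hz : z ≠ 0) (n : ℕ) :
    F q a b (sC q (-(1:ℝ)/2) * z) (n + 1)
      = b * (1 - a * sC q (((n:ℝ)+1)/2) * z⁻¹)
          * (sC q ((2*(n:ℝ)+1)/4) - a * sC q (-(1:ℝ)/4) * z)
          / (1 - (q:ℂ) ^ (n+1)) * F q a b z n := by
  rw [F_succ_eq hq, F_eq hq]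
  have hp1 : a * sC q (-(n:ℝ)/2) * (sC q (-(1:ℝ)/2) * z) = a * sC q (-((n:ℝ)+1)/2) * z := by
    rw [show -((n:ℝ)+1)/2 = -(n:ℝ)/2 + (-(1:ℝ)/2) by ring, sC_add hq]; ring
  have hp2 : a * sC q (-(n:ℝ)/2) * (sC q (-(1:ℝ)/2) * z)⁻¹
      = a * sC q ((1-(n:ℝ))/2) * z⁻¹ := by
    rw [mul_inv, show -(n:ℝ)/2 = (1-(n:ℝ))/2 + (-(1:ℝ)/2) by ring, sC_add hq]
    field_simp [sC_ne_zero hq]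
  rw [hp1, hp2, qPoch_succ' (a * sC q (-((n:ℝ)+1)/2) * z),
    qPoch_succ (a * sC q ((1-(n:ℝ))/2) * z⁻¹), qPoch_succ (q:ℂ) (q:ℂ) n]
  have hp1' : a * sC q (-((n:ℝ)+1)/2) * z * (q:ℂ) = a * sC q ((1-(n:ℝ))/2) * z := by
    nth_rewrite 1 [← sC_one hq]
    rw [show (1-(n:ℝ))/2 = -((n:ℝ)+1)/2 + 1 by ring, sC_add hq]; ring
  have hp2' : a * sC q ((1-(n:ℝ))/2) * z⁻¹ * (q:ℂ)^n = a * sC q (((n:ℝ)+1)/2) * z⁻¹ := by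
    rw [← sC_natCast hq, show ((n:ℝ)+1)/2 = (1-(n:ℝ))/2 + (n:ℝ) by ring, sC_add hq]; ring
  rw [hp1', hp2']
  have hc : sC q (((n:ℝ)+1)^2/4) = sC q ((2*(n:ℝ)+1)/4) * sC q ((n:ℝ)^2/4) := by
    rw [← sC_add hq]; congr 1; ring
  have hcomb : sC q ((2*(n:ℝ)+1)/4) - a * sC q (-(1:ℝ)/4) * z
      = sC q ((2*(n:ℝ)+1)/4) * (1 - a * sC q (-((n:ℝ)+1)/2) * z) := by
    rw [mul_sub, mul_one]
    congr 1
    rw [show (-(1:ℝ)/4) = (2*(n:ℝ)+1)/4 + (-((n:ℝ)+1)/2) by ring, sC_add hq]; ring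
  rw [hc, hcomb]
  have h1 := qPoch_q_ne_zero hq hq1 n
  have h2 := one_sub_q_pow_ne_zero hq hq1 (q:=q) n
  have h2' : (1:ℂ) - (q:ℂ) * (q:ℂ)^n ≠ 0 := by
    intro h; apply h2; rw [pow_succ]; linear_combination h
  field_simp [hz, h1, h2, h2']
  ring

include hq1 in
lemma F_diff (a b z : ℂ) (hz : z ≠ 0) (n : ℕ) :
    F q a b (sC q ((1:ℝ)/2) * z) (n + 1) - F q a b (sC q (-(1:ℝ)/2) * z) (n + 1)
      = a * b * sC q (-(1:ℝ)/4) * (z - z⁻¹) * F q a b z n := by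
  rw [F_succ_plus hq hq1 a b z hz n, F_succ_minus hq hq1 a b z hz n]
  have h2 := one_sub_q_pow_ne_zero hq hq1 (q:=q) n
  have hA : sC q (((n:ℝ)+1)/2) * sC q ((2*(n:ℝ)+1)/4) = sC q (-(1:ℝ)/4) * (q:ℂ)^(n+1) := by
    rw [← sC_natCast hq (n+1)]
    push_cast
    rw [← sC_add hq, ← sC_add hq]
    congr 1; ring
  rw [div_mul_eq_mul_div, div_mul_eq_mul_div, div_sub_div_same, div_eq_iff h2]
  linear_combination (-(a * b * (z - z⁻¹) * F q a b z n)) * hA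

omit hq in
lemma F_zero (a b z : ℂ) : F q a b z 0 = 1 := by
  norm_num [F, qPoch]

include hq1 in
lemma tendsto_sC (α β : ℝ) (hα : 0 < α) :
    Tendsto (fun n : ℕ => sC q (α*(n:ℝ)+β)) atTop (nhds 0) := by
  have he : ∀ n : ℕ, sC q (α*(n:ℝ)+β) = sC q β * (sC q α)^n := by
    intro n
    rw [sC_add hq, mul_comm]
    congr 1
    simp only [sC]
    norm_cast
    rw [Real.rpow_mul hq.le, Real.rpow_natCast]
  rw [tendsto_congr he]
  have hlt : ‖sC q α‖ < 1 := by rw [norm_sC hq]; exact Real.rpow_lt_one hq.le hq1 hα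
  simpa using (tendsto_pow_atTop_nhds_zero_of_norm_lt_one hlt).const_mul (sC q β)

include hq1 in
lemma tendsto_cp (a b z : ℂ) :
    Tendsto (fun n : ℕ => b * (1 - a * sC q (((n:ℝ)+1)/2) * z)
        * (sC q ((2*(n:ℝ)+1)/4) - a * sC q (-(1:ℝ)/4) * z⁻¹)
        / (1 - (q:ℂ) ^ (n+1))) atTop
      (nhds (-(a * b * sC q (-(1:ℝ)/4) * z⁻¹))) := by
  have h1 : Tendsto (fun n:ℕ => sC q (((n:ℝ)+1)/2)) atTop (nhds 0) :=
    (tendsto_sC hq hq1 (1/2) (1/2) (by norm_num)).congr (fun n => by congr 1; ring)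
  have h2 : Tendsto (fun n:ℕ => sC q ((2*(n:ℝ)+1)/4)) atTop (nhds 0) :=
    (tendsto_sC hq hq1 (1/2) (1/4) (by norm_num)).congr (fun n => by congr 1; ring)
  have hn : ‖(q:ℂ)‖ < 1 := by
    rw [Complex.norm_real, Real.norm_eq_abs, abs_of_pos hq]; exact hq1
  have h3 : Tendsto (fun n:ℕ => (q:ℂ)^(n+1)) atTop (nhds 0) :=
    (tendsto_pow_atTop_nhds_zero_of_norm_lt_one hn).comp (tendsto_add_atTop_nat 1)
  have e2 : Tendsto (fun n:ℕ => (1:ℂ) - a * sC q (((n:ℝ)+1)/2) * z) atTop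
      (nhds (1 - a*(0:ℂ)*z)) := tendsto_const_nhds.sub ((h1.const_mul a).mul_const z)
  have e3 : Tendsto (fun n:ℕ => sC q ((2*(n:ℝ)+1)/4) - a * sC q (-(1:ℝ)/4) * z⁻¹) atTop
      (nhds (0 - a * sC q (-(1:ℝ)/4) * z⁻¹)) := h2.sub tendsto_const_nhds
  have e4 : Tendsto (fun n:ℕ => (1:ℂ) - (q:ℂ)^(n+1)) atTop (nhds (1 - 0)) :=
    tendsto_const_nhds.sub h3
  have := (((tendsto_const_nhds (x := b)).mul e2).mul e3).div e4 (by norm_num)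
  rw [show -(a * b * sC q (-(1:ℝ)/4) * z⁻¹)
      = b * (1 - a*(0:ℂ)*z) * (0 - a * sC q (-(1:ℝ)/4) * z⁻¹) / (1 - 0) by ring]
  exact this

include hq1 in
lemma tendsto_cm (a b z : ℂ) :
    Tendsto (fun n : ℕ => b * (1 - a * sC q (((n:ℝ)+1)/2) * z⁻¹)
        * (sC q ((2*(n:ℝ)+1)/4) - a * sC q (-(1:ℝ)/4) * z)
        / (1 - (q:ℂ) ^ (n+1))) atTop
      (nhds (-(a * b * sC q (-(1:ℝ)/4) * z))) := by
  simpa using tendsto_cp hq hq1 a b z⁻¹ |>.congr (fun n => by rw [inv_inv])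

omit hq in
lemma summable_shift_iff {g h c : ℕ → ℂ} {L : ℂ} (hL : L ≠ 0)
    (hc : Tendsto c atTop (nhds L))
    (h0 : ∀ n, g (n + 1) = c n * h n) :
    Summable g ↔ Summable h := by
  rw [← summable_nat_add_iff 1]
  rw [show (fun n => g (n + 1)) = fun n => c n * h n from funext h0]
  have hL' : (0:ℝ) < ‖L‖ := norm_pos_iff.mpr hL
  constructor
  · intro hs
    have hev : ∀ᶠ n in atTop, ‖L‖ / 2 < ‖c n‖ :=
      hc.norm.eventually (eventually_gt_nhds (half_lt_self hL'))
    apply Summable.of_norm_bounded_eventually (g := fun n => (2/‖L‖) * ‖c n * h n‖)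
      ((summable_norm_iff.mpr hs).mul_left _)
    rw [Nat.cofinite_eq_atTop]
    filter_upwards [hev] with n hn
    rw [norm_mul, div_mul_eq_mul_div, le_div_iff₀ hL']
    nlinarith [norm_nonneg (h n), norm_nonneg (c n)]
  · intro hs
    have hev : ∀ᶠ n in atTop, ‖c n‖ < ‖L‖ + 1 :=
      hc.norm.eventually (eventually_lt_nhds (by linarith))
    apply Summable.of_norm_bounded_eventually (g := fun n => (‖L‖+1) * ‖h n‖)
      ((summable_norm_iff.mpr hs).mul_left _)
    rw [Nat.cofinite_eq_atTop]
    filter_upwards [hev] with n hn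
    rw [norm_mul]
    exact mul_le_mul_of_nonneg_right hn.le (norm_nonneg _)

end basic


theorem Eq_eigenfunction_tau (q : ℝ) (hq : 0 < q) (hq1 : q < 1) (a b : ℂ)
    (z : ℂ) (hz : z ≠ 0) (hz2 : z ^ 2 ≠ 1) :
    (Eq' q a b (((q ^ ((1 : ℝ) / 2) : ℝ) : ℂ) * z)
        - Eq' q a b (((q ^ (-(1 : ℝ) / 2) : ℝ) : ℂ) * z)) / (z - z⁻¹)
      = a * b * ((q ^ (-(1 : ℝ) / 4) : ℝ) : ℂ) * Eq' q a b z := by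
  have hzz : z - z⁻¹ ≠ 0 := by
    intro h
    apply hz2
    have hzz1 : z = z⁻¹ := by linear_combination h
    calc z^2 = z * z := sq z
    _ = z * z⁻¹ := by rw [← hzz1]
    _ = 1 := mul_inv_cancel₀ hz
  have hE : ∀ w : ℂ, Eq' q a b w = ∑' n, F q a b w n := fun w => rfl
  have hpt1 : (((q ^ ((1:ℝ)/2) : ℝ)) : ℂ) = sC q ((1:ℝ)/2) := rfl
  have hpt2 : (((q ^ (-(1:ℝ)/2) : ℝ)) : ℂ) = sC q (-(1:ℝ)/2) := rfl
  have hpt3 : (((q ^ (-(1:ℝ)/4) : ℝ)) : ℂ) = sC q (-(1:ℝ)/4) := rfl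
  rw [hE, hE, hE, hpt1, hpt2, hpt3]
  by_cases ha : a = 0
  · subst ha
    have hFz : ∀ w n, F q 0 b w n = F q 0 b z n := by intro w n; simp [F]
    rw [tsum_congr (fun n => hFz (sC q ((1:ℝ)/2) * z) n),
      tsum_congr (fun n => hFz (sC q (-(1:ℝ)/2) * z) n)]
    simp
  by_cases hb : b = 0
  · subst hb
    have hFz : ∀ w n, F q a 0 w n = F q a 0 z n := by
      intro w n
      cases n with
      | zero => rw [F_zero, F_zero]
      | succ m => simp [F]
    rw [tsum_congr (fun n => hFz (sC q ((1:ℝ)/2) * z) n),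
      tsum_congr (fun n => hFz (sC q (-(1:ℝ)/2) * z) n)]
    simp
  have hzi : z⁻¹ ≠ 0 := inv_ne_zero hz
  have hs4 : sC q (-(1:ℝ)/4) ≠ 0 := sC_ne_zero hq _
  have hLp : -(a * b * sC q (-(1:ℝ)/4) * z⁻¹) ≠ 0 := by
    simp only [neg_ne_zero]
    exact mul_ne_zero (mul_ne_zero (mul_ne_zero ha hb) hs4) hzi
  have hLm : -(a * b * sC q (-(1:ℝ)/4) * z) ≠ 0 := by
    simp only [neg_ne_zero]
    exact mul_ne_zero (mul_ne_zero (mul_ne_zero ha hb) hs4) hz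
  have iffp : Summable (F q a b (sC q ((1:ℝ)/2) * z)) ↔ Summable (F q a b z) :=
    summable_shift_iff hLp (tendsto_cp hq hq1 a b z)
      (fun n => F_succ_plus hq hq1 a b z hz n)
  have iffm : Summable (F q a b (sC q (-(1:ℝ)/2) * z)) ↔ Summable (F q a b z) :=
    summable_shift_iff hLm (tendsto_cm hq hq1 a b z)
      (fun n => F_succ_minus hq hq1 a b z hz n)
  by_cases hsum : Summable (F q a b z)
  · have hp := iffp.mpr hsum
    have hm := iffm.mpr hsum
    rw [← Summable.tsum_sub hp hm, Summable.tsum_eq_zero_add (hp.sub hm)]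
    have h00 : F q a b (sC q ((1:ℝ)/2) * z) 0 - F q a b (sC q (-(1:ℝ)/2) * z) 0 = 0 := by
      rw [F_zero, F_zero]; ring
    rw [h00, zero_add, tsum_congr (fun n => F_diff hq hq1 a b z hz n), tsum_mul_left,
      div_eq_iff hzz]
    ring
  · rw [tsum_eq_zero_of_not_summable hsum,
      tsum_eq_zero_of_not_summable (fun hh => hsum (iffp.mp hh)),
      tsum_eq_zero_of_not_summable (fun hh => hsum (iffm.mp hh))]
    simp
end

section
/- With operators A₊, B₊, P on the representation space defined by A₊ f_n^m = -q^{-n/2}(1-q^n) f_{n-1}^{m+1}, B₊ f_n^m = q^{-n/2} f_n^{m+1}, and P f_n^m = f_{n+1}^m + q^{n+m/2} f_n^m + (1-q^n) f_{n-1}^m, the relations B₊A₊ - q^{1/2} A₊B₊ = 0 and A₊P - q^{1/2} P A₊ = -q^{-1/2}(1-q) B₊ hold. -/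
/-- Representation space with basis `f_n^m`, `n ∈ ℤ≥0`, `m ∈ ℤ`. -/
abbrev RepSpace : Type := (ℕ × ℤ) →₀ ℝ

/-- Basis vector `f_n^m`. -/
noncomputable def f (n : ℕ) (m : ℤ) : RepSpace := Finsupp.single (n, m) 1

theorem ApBpP_relations (q : ℝ) (hq : 0 < q) (hq1 : q < 1)
    (Ap Bp P : RepSpace →ₗ[ℝ] RepSpace)
    (hAp : ∀ (n : ℕ) (m : ℤ),
      Ap (f (n + 1) m) = -(q ^ (-((n : ℝ) + 1) / 2) * (1 - q ^ (n + 1))) • f n (m + 1))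
    (hAp0 : ∀ m : ℤ, Ap (f 0 m) = 0)
    (hBp : ∀ (n : ℕ) (m : ℤ), Bp (f n m) = (q ^ (-(n : ℝ) / 2)) • f n (m + 1))
    (hP : ∀ (n : ℕ) (m : ℤ),
      P (f (n + 1) m) = f (n + 2) m + (q ^ ((n : ℝ) + 1 + (m : ℝ) / 2)) • f (n + 1) m
        + (1 - q ^ (n + 1)) • f n m)
    (hP0 : ∀ m : ℤ, P (f 0 m) = f 1 m + (q ^ ((m : ℝ) / 2)) • f 0 m) :
    Bp ∘ₗ Ap - (q ^ ((1 : ℝ) / 2)) • (Ap ∘ₗ Bp) = 0 ∧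
    Ap ∘ₗ P - (q ^ ((1 : ℝ) / 2)) • (P ∘ₗ Ap) = (-(q ^ (-(1 : ℝ) / 2) * (1 - q))) • Bp := by
  have hone : (1 : ℝ) - q = 1 - q ^ (1 : ℕ) := by norm_num
  have ext2 : ∀ (F G : RepSpace →ₗ[ℝ] RepSpace), (∀ n m, F (f n m) = G (f n m)) → F = G := by
    intro F G h
    refine Finsupp.lhom_ext fun p b => ?_
    obtain ⟨n, m⟩ := p
    have hb : (Finsupp.single (n, m) b : RepSpace) = b • f n m := by
      simp [f, Finsupp.smul_single]
    rw [hb, map_smul, map_smul, h]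
  constructor
  · apply ext2; intro n m
    cases n with
    | zero =>
      simp [LinearMap.sub_apply, LinearMap.comp_apply, LinearMap.smul_apply,
        hAp0, hBp, map_smul, hAp0]
    | succ k =>
      simp only [LinearMap.sub_apply, LinearMap.comp_apply, LinearMap.smul_apply,
        LinearMap.zero_apply, hAp, hBp, map_smul, map_neg, smul_neg, smul_smul,
        neg_smul]
      rw [sub_eq_zero]
      congr 1
      simp only [← Real.rpow_natCast q, mul_sub, sub_mul, neg_mul, mul_neg, mul_one, one_mul,
        ← Real.rpow_add hq]
      push_cast
      ring_nf
  · apply ext2; intro n m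
    rw [LinearMap.sub_apply, LinearMap.smul_apply, LinearMap.smul_apply, hone]
    match n with
    | 0 =>
      simp only [LinearMap.comp_apply, hP0, hAp0, hBp, map_add, map_smul, hAp,
        map_zero, smul_zero, smul_smul]
      match_scalars <;>
      · simp only [← Real.rpow_natCast q, mul_sub, sub_mul, neg_mul, mul_neg, mul_one, one_mul,
          ← Real.rpow_add hq]
        push_cast
        ring_nf
    | 1 =>
      simp only [LinearMap.comp_apply, hP0, hAp0, hP, hAp, hBp, map_add, map_smul,
        smul_zero, smul_smul, map_neg, smul_neg, neg_smul]
      match_scalars <;>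
      · simp only [← Real.rpow_natCast q, mul_sub, sub_mul, neg_mul, mul_neg, mul_one, one_mul,
          ← Real.rpow_add hq]
        push_cast
        ring_nf
    | (k+2) =>
      have h1 : k + 2 = (k + 1) + 1 := rfl
      simp only [LinearMap.comp_apply, h1, hP, hAp, hBp, map_add, map_smul, smul_smul,
        map_neg, smul_neg, neg_smul]
      match_scalars <;>
      · simp only [← Real.rpow_natCast q, mul_sub, sub_mul, neg_mul, mul_neg, mul_one, one_mul,
          ← Real.rpow_add hq]
        push_cast
        ring_nf
end
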